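/- arXiv:2202.11250 — 8 statements merged into one kernel-verified Lean document; each statement's English description precedes it below -/
import Mathlib

section
/- Fix integers k ≥ 2 and N ≥ 1 and a real number δ with 0 < δ and δ·N < 1. For a = (a_1,…,a_k) ∈ {1,…,N}^k define φ(a) ∈ ℝ^{2k−1} to be the point whose first coordinate is a_1 − δ·a_k, whose (2i−1)-th coordinate is a_i for each i ∈ {2,…,k−1}, whose (2i)-th coordinate is N − a_i for each i ∈ {1,…,k−1}, and whose (2k−1)-th coordinate is a_k (that is, φ(a) = (a_1 − δa_k, N − a_1, a_2, N − a_2, …, a_{k−1}, N − a_{k−1}, a_k)). Then for all a, b ∈ {1,…,N}^k, if φ(a)_i ≤ φ(b)_i for every coordinate i ∈ {1,…,2k−1}, then a = b. In particular φ is injective and the points φ(a), for distinct tuples a, are pairwise incomparable in the coordinatewise partial order on ℝ^{2k−1}. -/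
/-- The `j`-th coordinate (1-indexed, `1 ≤ j ≤ 2*k-1`) of the point
`φ(a) = (a₁ - δ·a_k, N - a₁, a₂, N - a₂, …, a_{k-1}, N - a_{k-1}, a_k)`,
where `a` is given (1-indexed) as a function `ℕ → ℝ`. -/
noncomputable def phiCoord (δ : ℝ) (N k : ℕ) (a : ℕ → ℝ) (j : ℕ) : ℝ :=
  if j = 1 then a 1 - δ * a k
  else if j = 2 * k - 1 then a k
  else if j % 2 = 1 then a ((j + 1) / 2)
  else (N : ℝ) - a (j / 2)

/-- The point `φ(a) ∈ ℝ^{2k-1}` associated to a tuple `a ∈ {1,…,N}^k`. -/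
noncomputable def phiPt (δ : ℝ) (N k : ℕ) (a : Fin k → ℕ) : Fin (2 * k - 1) → ℝ :=
  fun j =>
    phiCoord δ N k
      (fun i => if h : 1 ≤ i ∧ i ≤ k then ((a ⟨i - 1, by omega⟩ : ℕ) : ℝ) else 0)
      (j.1 + 1)

/-!
Every `a_i` with `i ≥ 2` occurs with a plus sign (the coordinate `a_i`) and every `a_i` with
`i < k` with a minus sign (the coordinate `N - a_i`), so domination `φ(a) ≤ φ(b)` forces
`a_i = b_i` for `1 < i < k`, `a_k ≤ b_k` and `b_1 ≤ a_1`. The first coordinate then gives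
`δ (b_k - a_k) ≤ b_1 - a_1 ≤ 0`, hence `a_k = b_k` as `δ > 0`, and finally `a_1 = b_1`.
-/

section phiCoord

variable {δ : ℝ} {N k : ℕ} {x y : ℕ → ℝ}

theorem phiCoord_one : phiCoord δ N k x 1 = x 1 - δ * x k := if_pos rfl

theorem phiCoord_two_mul_sub_one {i : ℕ} (hi : 2 ≤ i) (hik : i ≤ k) :
    phiCoord δ N k x (2 * i - 1) = x i := by
  unfold phiCoord
  rw [if_neg (by omega)]
  rcases hik.eq_or_lt with rfl | hik
  · exact if_pos rfl
  · rw [if_neg (by omega), if_pos (by omega)]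
    congr 1
    omega

theorem phiCoord_two_mul {i : ℕ} (hi : 1 ≤ i) :
    phiCoord δ N k x (2 * i) = N - x i := by
  unfold phiCoord
  rw [if_neg (by omega), if_neg (by omega), if_neg (by omega)]
  congr 2
  omega

theorem eq_of_phiCoord_le (hk : 2 ≤ k) (hδ : 0 < δ)
    (h : ∀ j, 1 ≤ j → j ≤ 2 * k - 1 → phiCoord δ N k x j ≤ phiCoord δ N k y j)
    {i : ℕ} (hi : 1 ≤ i) (hik : i ≤ k) : x i = y i := by
  have hplus : ∀ i, 2 ≤ i → i ≤ k → x i ≤ y i := fun i hi hik => by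
    simpa only [phiCoord_two_mul_sub_one hi hik] using h (2 * i - 1) (by omega) (by omega)
  have hminus : ∀ i, 1 ≤ i → i < k → y i ≤ x i := fun i hi hik => by
    simpa only [phiCoord_two_mul hi, sub_le_sub_iff_left] using h (2 * i) (by omega) (by omega)
  have hfirst : x 1 - δ * x k ≤ y 1 - δ * y k := by
    simpa only [phiCoord_one] using h 1 le_rfl (by omega)
  have hxk := hplus k hk le_rfl
  have hy1 := hminus 1 le_rfl (by omega)
  have hk_eq : x k = y k :=
    le_antisymm hxk (le_of_mul_le_mul_left (by linarith) hδ)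
  have h1_eq : x 1 = y 1 := le_antisymm (by rw [hk_eq] at hfirst; linarith) hy1
  rcases hi.eq_or_lt with rfl | hi
  · exact h1_eq
  rcases hik.eq_or_lt with rfl | hik
  · exact hk_eq
  · exact le_antisymm (hplus i hi hik.le) (hminus i (by omega) hik)

end phiCoord

noncomputable def oneIndexed {k : ℕ} (a : Fin k → ℕ) (i : ℕ) : ℝ :=
  if h : 1 ≤ i ∧ i ≤ k then ((a ⟨i - 1, by omega⟩ : ℕ) : ℝ) else 0

theorem phiPt_apply (δ : ℝ) (N : ℕ) {k : ℕ} (a : Fin k → ℕ) (j : Fin (2 * k - 1)) :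
    phiPt δ N k a j = phiCoord δ N k (oneIndexed a) (j + 1) := rfl

theorem oneIndexed_succ {k : ℕ} (a : Fin k → ℕ) (i : Fin k) : oneIndexed a (i + 1) = a i := by
  simp [oneIndexed, i.2]

theorem phiPt_pairwise_incomparable_general (k N : ℕ) (hk : 2 ≤ k)
    (δ : ℝ) (hδ : 0 < δ)
    (a b : Fin k → ℕ)
    (hdom : ∀ j : Fin (2 * k - 1), phiPt δ N k a j ≤ phiPt δ N k b j) :
    a = b := by
  funext i
  have hcoord : oneIndexed a (i + 1) = oneIndexed b (i + 1) := by
    refine eq_of_phiCoord_le (N := N) hk hδ (fun j hj hjk => ?_) (by omega) (by omega)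
    simpa only [phiPt_apply, Nat.sub_add_cancel hj] using hdom ⟨j - 1, by omega⟩
  exact_mod_cast (oneIndexed_succ a i).symm.trans (hcoord.trans (oneIndexed_succ b i))

/-- Two distinct initial points do not dominate each other: if every coordinate of
`φ(a)` is at most the corresponding coordinate of `φ(b)`, then `a = b`. -/
theorem phiPt_pairwise_incomparable (k N : ℕ) (hk : 2 ≤ k) (hN : 1 ≤ N)
    (δ : ℝ) (hδ : 0 < δ) (hδN : δ * N < 1)
    (a b : Fin k → ℕ)
    (ha : ∀ i, a i ∈ Finset.Icc 1 N) (hb : ∀ i, b i ∈ Finset.Icc 1 N)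
    (hdom : ∀ j : Fin (2 * k - 1), phiPt δ N k a j ≤ phiPt δ N k b j) :
    a = b :=
  phiPt_pairwise_incomparable_general k N hk δ hδ a b hdom
end

section
/- Fix integers k ≥ 2 and N ≥ 1, a real number δ with 0 < δ and δ·N < 1, and a real number W with W > N. For a = (a_1,…,a_k) ∈ {1,…,N}^k define φ(a) ∈ ℝ^{2k−1} to be the point whose first coordinate is a_1 − δ·a_k, whose (2i−1)-th coordinate is a_i for each i ∈ {2,…,k−1}, whose (2i)-th coordinate is N − a_i for each i ∈ {1,…,k−1}, and whose (2k−1)-th coordinate is a_k. Let M ⊆ {1,…,N}^k, let U_1, …, U_{k−1} ⊆ {1,…,N}, and let j ∈ {0,1,…,N}. Let P ⊆ ℝ^{2k−1} be the finite set consisting of: (i) the points φ(a) for a ∈ M; (ii) for each i ∈ {1,…,k−1} and each j' ∈ {1,…,N} ∖ U_i, the point β_{i,j'} whose (2i−1)-th coordinate is j', whose (2i)-th coordinate is N − j', and all of whose other coordinates equal W; and (iii) the point γ whose (2k−1)-th coordinate is j and all of whose other coordinates equal W. Then the number of maximal points of P equals (Σ_{i=1}^{k−1} (N − |U_i|)) +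 1 + |{a ∈ M : a_i ∈ U_i for every i ∈ {1,…,k−1}, and a_k > j}|. -/
open scoped Classical

/-- The point `β_{i,j'} ∈ ℝ^{2k-1}` whose `(2i-1)`-th coordinate is `j'`, whose
`(2i)`-th coordinate is `N - j'`, and all other coordinates are `W`. -/
noncomputable def betaPt (W : ℝ) (N k i j' : ℕ) : Fin (2 * k - 1) → ℝ :=
  fun m =>
    if m.1 + 1 = 2 * i - 1 then (j' : ℝ)
    else if m.1 + 1 = 2 * i then (N : ℝ) - (j' : ℝ)
    else W

/-- The point `γ ∈ ℝ^{2k-1}` whose `(2k-1)`-th coordinate is `j` and all other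
coordinates are `W`. -/
noncomputable def gammaPt (W : ℝ) (k j : ℕ) : Fin (2 * k - 1) → ℝ :=
  fun m => if m.1 + 1 = 2 * k - 1 then (j : ℝ) else W

/-! The skyline consists of every `β_{i,j'}`, the point `γ`, and the `φ(a)` with
`a ∈ U₁ × ⋯ × U_{k-1} × {j+1, …}`. A point `β` or `γ` equals `W > N` at some coordinate
where every other point of `P` is at most `N`, except that `β_{i,j'}` and `β_{i,j''}` share
their `W`-coordinates and are separated by the pair `(j', N - j')`. For the tuple points, the
pair of coordinates `(a_i, N - a_i)` gives `φ(a) ≤ β_{i,j'} ↔ j' = a_i` (the first coordinate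
is perturbed by `δ a_k < 1` only), the last coordinate gives `φ(a) ≤ γ ↔ a_k ≤ j`, and the
`-δ a_k` term makes `φ(a) ≤ φ(b)` force `a = b`. Hence `φ(a)` is maximal iff `a_i ∈ U_i` for
all `i < k` (otherwise `β_{i,a_i} ∈ P` lies above it) and `a_k > j` (otherwise `γ` does). The
three families of maximal points are pairwise disjoint, which gives the count. -/

open Finset

lemma maximal_iff_forall_ne_not_le {α : Type*} [PartialOrder α] {P : α → Prop} {x : α} :
    Maximal P x ↔ P x ∧ ∀ y, P y → y ≠ x → ¬ x ≤ y :=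
  maximal_iff.trans <| and_congr_right fun _ => forall₂_congr fun y _ => by
    rw [imp_not_comm, not_ne_iff, eq_comm]

section Coordinates

variable {δ W : ℝ} {N k i j j' : ℕ} {m : Fin (2 * k - 1)}

lemma oneIndexed_apply (a : Fin k → ℕ) (t : Fin k) (hi : i = t.1 + 1) :
    (if _h : 1 ≤ i ∧ i ≤ k then ((a ⟨i - 1, by omega⟩ : ℕ) : ℝ) else 0) = a t := by
  subst hi
  rw [dif_pos (by omega)]
  rfl

lemma phiPt_apply_of_val_eq_zero (a : Fin k → ℕ) (hm : m.1 = 0) {s t : Fin k} (hs : s.1 = 0)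
    (ht : t.1 + 1 = k) : phiPt δ N k a m = a s - δ * a t := by
  simp only [phiPt, phiCoord, hm, if_true]
  rw [oneIndexed_apply a s (by omega), oneIndexed_apply a t ht.symm]

lemma phiPt_apply_of_val_eq_last (hk : 2 ≤ k) (a : Fin k → ℕ) (hm : m.1 + 2 = 2 * k)
    {t : Fin k} (ht : t.1 + 1 = k) : phiPt δ N k a m = a t := by
  simp only [phiPt, phiCoord, if_neg (show m.1 + 1 ≠ 1 by omega),
    if_pos (show m.1 + 1 = 2 * k - 1 by omega)]
  rw [oneIndexed_apply a t ht.symm]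

lemma phiPt_apply_of_val_eq_odd (a : Fin k → ℕ) {t : Fin k} (hm : m.1 = 2 * t.1 + 1) :
    phiPt δ N k a m = N - a t := by
  have hmk := m.2
  simp only [phiPt, phiCoord, if_neg (show m.1 + 1 ≠ 1 by omega),
    if_neg (show m.1 + 1 ≠ 2 * k - 1 by omega),
    if_neg (show (m.1 + 1) % 2 ≠ 1 by omega)]
  rw [oneIndexed_apply a t (by omega)]

lemma phiPt_apply_of_val_eq_even (a : Fin k → ℕ) {t : Fin k} (hm : m.1 = 2 * t.1)
    (h0 : t.1 ≠ 0) (ht : t.1 + 1 < k) : phiPt δ N k a m = a t := by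
  simp only [phiPt, phiCoord, if_neg (show m.1 + 1 ≠ 1 by omega),
    if_neg (show m.1 + 1 ≠ 2 * k - 1 by omega),
    if_pos (show (m.1 + 1) % 2 = 1 by omega)]
  rw [oneIndexed_apply a t (by omega)]

lemma betaPt_apply_of_val_add_two_eq (hm : m.1 + 2 = 2 * i) : betaPt W N k i j' m = j' := by
  simp only [betaPt, if_pos (show m.1 + 1 = 2 * i - 1 by omega)]

lemma betaPt_apply_of_val_add_one_eq (hm : m.1 + 1 = 2 * i) :
    betaPt W N k i j' m = N - j' := by
  simp only [betaPt, if_neg (show m.1 + 1 ≠ 2 * i - 1 by omega), if_pos hm]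

lemma betaPt_apply_of_ne (h₂ : m.1 + 2 ≠ 2 * i) (h₁ : m.1 + 1 ≠ 2 * i) :
    betaPt W N k i j' m = W := by
  simp only [betaPt, if_neg (show m.1 + 1 ≠ 2 * i - 1 by omega), if_neg h₁]

lemma gammaPt_apply_of_val_add_two_eq (hm : m.1 + 2 = 2 * k) : gammaPt W k j m = j := by
  simp only [gammaPt, if_pos (show m.1 + 1 = 2 * k - 1 by omega)]

lemma gammaPt_apply_of_ne (hm : m.1 + 2 ≠ 2 * k) : gammaPt W k j m = W := by
  simp only [gammaPt, if_neg (show m.1 + 1 ≠ 2 * k - 1 by omega)]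

lemma phiCoord_le (hδ : 0 ≤ δ) {f : ℕ → ℝ} (hf : ∀ i, 0 ≤ f i ∧ f i ≤ N) (l : ℕ) :
    phiCoord δ N k f l ≤ N := by
  unfold phiCoord
  split_ifs
  · nlinarith [hf 1, hf k]
  · exact (hf k).2
  · exact (hf _).2
  · linarith [(hf (l / 2)).1]

lemma phiPt_le (hδ : 0 ≤ δ) {a : Fin k → ℕ} (ha : ∀ t, a t ≤ N) (m : Fin (2 * k - 1)) :
    phiPt δ N k a m ≤ N :=
  phiCoord_le hδ (fun _ => by split_ifs <;> simp [ha]) _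

-- `δ a_k ≤ δ N < 1`: the perturbation of the first coordinate is too small to hide `a₁`.
lemma phiPt_apply_mem_Ioc (hδ : 0 ≤ δ) (hδN : δ * N < 1) {a : Fin k → ℕ}
    (ha : ∀ t, a t ≤ N) {t : Fin k} (ht : t.1 + 1 < k) (hm : m.1 = 2 * t.1) :
    phiPt δ N k a m ∈ Set.Ioc ((a t : ℝ) - 1) (a t) := by
  by_cases h0 : t.1 = 0
  · have hlast : (a ⟨k - 1, by omega⟩ : ℝ) ≤ N := by exact_mod_cast ha _
    rw [phiPt_apply_of_val_eq_zero a (by omega) h0 (t := ⟨k - 1, by omega⟩) (by simp; omega)]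
    constructor <;> nlinarith
  · rw [phiPt_apply_of_val_eq_even a hm h0 ht]
    simp

end Coordinates

section Domination

variable {δ W : ℝ} {N k j : ℕ}

lemma eq_of_phiPt_le_phiPt (hk : 2 ≤ k) (hδ : 0 < δ) {a b : Fin k → ℕ}
    (h : phiPt δ N k a ≤ phiPt δ N k b) : a = b := by
  obtain ⟨first, hfirst⟩ : ∃ t : Fin k, t.1 = 0 := ⟨⟨0, by omega⟩, rfl⟩
  obtain ⟨last, hlast⟩ : ∃ t : Fin k, t.1 + 1 = k := ⟨⟨k - 1, by omega⟩, by simp; omega⟩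
  have hodd : ∀ t : Fin k, t.1 + 1 < k → (b t : ℝ) ≤ a t := fun t ht => by
    have := h ⟨2 * t + 1, by omega⟩
    rwa [phiPt_apply_of_val_eq_odd a rfl, phiPt_apply_of_val_eq_odd b rfl,
      sub_le_sub_iff_left] at this
  have heven : ∀ t : Fin k, t.1 ≠ 0 → t.1 + 1 < k → (a t : ℝ) ≤ b t := fun t h0 ht => by
    have := h ⟨2 * t, by omega⟩
    rwa [phiPt_apply_of_val_eq_even a rfl h0 ht,
      phiPt_apply_of_val_eq_even b rfl h0 ht] at this
  have hle_last : (a last : ℝ) ≤ b last := by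
    have := h ⟨2 * k - 2, by omega⟩
    rwa [phiPt_apply_of_val_eq_last hk a (by simp; omega) hlast,
      phiPt_apply_of_val_eq_last hk b (by simp; omega) hlast] at this
  have hle_zero : (a first : ℝ) - δ * a last ≤ b first - δ * b last := by
    have := h ⟨0, by omega⟩
    rwa [phiPt_apply_of_val_eq_zero a rfl hfirst hlast,
      phiPt_apply_of_val_eq_zero b rfl hfirst hlast] at this
  have hge_first := hodd first (by omega)
  -- `a₁ - b₁ ≤ δ (a_k - b_k)`, with the left side `≥ 0` and the right side `≤ 0`.
  have hlast_eq : (a last : ℝ) = b last := by nlinarith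
  have hfirst_eq : (a first : ℝ) = b first := by nlinarith
  funext t
  suffices (a t : ℝ) = b t by exact_mod_cast this
  by_cases ht : t.1 + 1 = k
  · rwa [show t = last from Fin.ext (by omega)]
  by_cases h0 : t.1 = 0
  · rwa [show t = first from Fin.ext (by omega)]
  exact le_antisymm (heven t h0 (by omega)) (hodd t (by omega))

lemma phiPt_le_betaPt_iff (hδ : 0 ≤ δ) (hδN : δ * N < 1) (hW : N ≤ W) {a : Fin k → ℕ}
    (ha : ∀ t, a t ≤ N) {i j' : ℕ} {t : Fin k} (ht : t.1 + 1 = i) (hi : i < k) :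
    phiPt δ N k a ≤ betaPt W N k i j' ↔ j' = a t := by
  constructor
  · intro h
    have hle : (j' : ℝ) ≤ a t := by
      have := h ⟨2 * t + 1, by omega⟩
      rwa [phiPt_apply_of_val_eq_odd a rfl, betaPt_apply_of_val_add_one_eq (by simp; omega),
        sub_le_sub_iff_left] at this
    have hlt : (a t : ℝ) < j' + 1 := by
      have := h ⟨2 * t, by omega⟩
      rw [betaPt_apply_of_val_add_two_eq (by simp; omega)] at this
      linarith [(phiPt_apply_mem_Ioc hδ hδN ha (by omega) (m := ⟨2 * t, by omega⟩) rfl).1]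
    have hle' : j' ≤ a t := by exact_mod_cast hle
    have hlt' : a t < j' + 1 := by exact_mod_cast hlt
    omega
  · rintro rfl m
    by_cases h₂ : m.1 + 2 = 2 * i
    · rw [betaPt_apply_of_val_add_two_eq h₂]
      exact (phiPt_apply_mem_Ioc hδ hδN ha (by omega) (by omega)).2
    by_cases h₁ : m.1 + 1 = 2 * i
    · rw [betaPt_apply_of_val_add_one_eq h₁, phiPt_apply_of_val_eq_odd a (t := t) (by omega)]
    rw [betaPt_apply_of_ne h₂ h₁]
    exact (phiPt_le hδ ha m).trans hW

lemma phiPt_le_gammaPt_iff (hk : 2 ≤ k) (hδ : 0 ≤ δ) (hW : N ≤ W) {a : Fin k → ℕ}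
    (ha : ∀ t, a t ≤ N) : phiPt δ N k a ≤ gammaPt W k j ↔ a ⟨k - 1, by omega⟩ ≤ j := by
  constructor
  · intro h
    have := h ⟨2 * k - 2, by omega⟩
    rw [phiPt_apply_of_val_eq_last hk a (by simp; omega) (t := ⟨k - 1, by omega⟩)
      (by simp; omega), gammaPt_apply_of_val_add_two_eq (by simp; omega)] at this
    exact Nat.cast_le.mp this
  · intro hj m
    by_cases hm : m.1 + 2 = 2 * k
    · rw [gammaPt_apply_of_val_add_two_eq hm,
        phiPt_apply_of_val_eq_last hk a hm (t := ⟨k - 1, by omega⟩) (by simp; omega)]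
      exact Nat.cast_le.mpr hj
    rw [gammaPt_apply_of_ne hm]
    exact (phiPt_le hδ ha m).trans hW

lemma eq_of_betaPt_le_betaPt (hW : (N : ℝ) < W) {i i' j' j'' : ℕ} (hi' : 1 ≤ i')
    (hi'k : i' < k) (hj'' : j'' ≤ N) (h : betaPt W N k i j' ≤ betaPt W N k i' j'') :
    i = i' ∧ j' = j'' := by
  have hj''W : (j'' : ℝ) < W := lt_of_le_of_lt (by exact_mod_cast hj'') hW
  have hii : i = i' := by
    by_contra hne
    have := h ⟨2 * i' - 2, by omega⟩
    rw [betaPt_apply_of_val_add_two_eq (i := i') (by simp; omega),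
      betaPt_apply_of_ne (i := i) (by simp; omega) (by simp; omega)] at this
    linarith
  subst hii
  have h₂ := h ⟨2 * i - 2, by omega⟩
  have h₁ := h ⟨2 * i - 1, by omega⟩
  rw [betaPt_apply_of_val_add_two_eq (by simp; omega),
    betaPt_apply_of_val_add_two_eq (by simp; omega)] at h₂
  rw [betaPt_apply_of_val_add_one_eq (by simp; omega),
    betaPt_apply_of_val_add_one_eq (by simp; omega)] at h₁
  exact ⟨rfl, Nat.cast_injective (le_antisymm h₂ (by linarith))⟩

lemma not_betaPt_le_phiPt (hδ : 0 ≤ δ) (hW : (N : ℝ) < W) {i j' : ℕ} (hi : i < k)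
    {b : Fin k → ℕ} (hb : ∀ t, b t ≤ N) : ¬ betaPt W N k i j' ≤ phiPt δ N k b := fun h => by
  have := h ⟨2 * k - 2, by omega⟩
  rw [betaPt_apply_of_ne (by simp; omega) (by simp; omega)] at this
  linarith [phiPt_le hδ hb ⟨2 * k - 2, by omega⟩]

lemma not_betaPt_le_gammaPt (hW : (N : ℝ) < W) (hj : j ≤ N) {i j' : ℕ} (hi : i < k) :
    ¬ betaPt W N k i j' ≤ gammaPt W k j := fun h => by
  have := h ⟨2 * k - 2, by omega⟩
  rw [betaPt_apply_of_ne (by simp; omega) (by simp; omega),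
    gammaPt_apply_of_val_add_two_eq (by simp; omega)] at this
  linarith [show (j : ℝ) ≤ N by exact_mod_cast hj]

lemma not_gammaPt_le_phiPt (hk : 2 ≤ k) (hδ : 0 ≤ δ) (hW : (N : ℝ) < W) {b : Fin k → ℕ}
    (hb : ∀ t, b t ≤ N) : ¬ gammaPt W k j ≤ phiPt δ N k b := fun h => by
  have := h ⟨0, by omega⟩
  rw [gammaPt_apply_of_ne (by simp; omega)] at this
  linarith [phiPt_le hδ hb ⟨0, by omega⟩]

lemma not_gammaPt_le_betaPt (hW : (N : ℝ) < W) {i j' : ℕ} (hi : 1 ≤ i) (hik : i < k)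
    (hj' : j' ≤ N) : ¬ gammaPt W k j ≤ betaPt W N k i j' := fun h => by
  have := h ⟨2 * i - 2, by omega⟩
  rw [gammaPt_apply_of_ne (by simp; omega),
    betaPt_apply_of_val_add_two_eq (by simp; omega)] at this
  linarith [show (j' : ℝ) ≤ N by exact_mod_cast hj']

end Domination

noncomputable def betaPoints (W : ℝ) (N k : ℕ) (U : ℕ → Finset ℕ) :
    Finset (Fin (2 * k - 1) → ℝ) :=
  (Icc 1 (k - 1)).biUnion fun i => (Icc 1 N \ U i).image (betaPt W N k i)

noncomputable def reductionPoints (δ W : ℝ) (N k : ℕ) (M : Finset (Fin k → ℕ))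
    (U : ℕ → Finset ℕ) (j : ℕ) : Finset (Fin (2 * k - 1) → ℝ) :=
  M.image (phiPt δ N k) ∪ betaPoints W N k U ∪ {gammaPt W k j}

/-- `a ∈ U₁ × ⋯ × U_{k-1} × {j + 1, j + 2, …}`. -/
def InQueryBox (U : ℕ → Finset ℕ) (j : ℕ) {k : ℕ} (hk : 0 < k) (a : Fin k → ℕ) : Prop :=
  (∀ t : Fin k, t.1 + 1 ≤ k - 1 → a t ∈ U (t.1 + 1)) ∧ j < a ⟨k - 1, by omega⟩

section Skyline

variable {δ W : ℝ} {N k j : ℕ} {M : Finset (Fin k → ℕ)} {U : ℕ → Finset ℕ}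

lemma mem_betaPoints {p : Fin (2 * k - 1) → ℝ} :
    p ∈ betaPoints W N k U ↔
      ∃ i ∈ Icc 1 (k - 1), ∃ j' ∈ Icc 1 N \ U i, betaPt W N k i j' = p := by
  simp only [betaPoints, mem_biUnion, mem_image]

lemma mem_reductionPoints {p : Fin (2 * k - 1) → ℝ} :
    p ∈ reductionPoints δ W N k M U j ↔
      (∃ a ∈ M, phiPt δ N k a = p) ∨ p ∈ betaPoints W N k U ∨ p = gammaPt W k j := by
  simp only [reductionPoints, mem_union, mem_image, mem_singleton, or_assoc]

lemma maximal_of_mem_betaPoints (hδ : 0 ≤ δ) (hW : (N : ℝ) < W) (hj : j ≤ N)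
    (hM : ∀ a ∈ M, ∀ t, a t ≤ N) {p : Fin (2 * k - 1) → ℝ} (hp : p ∈ betaPoints W N k U) :
    Maximal (· ∈ reductionPoints δ W N k M U j) p := by
  refine maximal_iff.2 ⟨mem_reductionPoints.2 (Or.inr (Or.inl hp)), fun q hq hpq => ?_⟩
  obtain ⟨i, hi, j', -, rfl⟩ := mem_betaPoints.1 hp
  have hik : i < k := by rw [mem_Icc] at hi; omega
  rcases mem_reductionPoints.1 hq with ⟨b, hb, rfl⟩ | hq | rfl
  · exact absurd hpq (not_betaPt_le_phiPt hδ hW hik (hM b hb))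
  · obtain ⟨i', hi', j'', hj'', rfl⟩ := mem_betaPoints.1 hq
    simp only [mem_sdiff, mem_Icc] at hi' hj''
    obtain ⟨rfl, rfl⟩ := eq_of_betaPt_le_betaPt hW hi'.1 (by omega) hj''.1.2 hpq
    rfl
  · exact absurd hpq (not_betaPt_le_gammaPt hW hj hik)

lemma maximal_gammaPt (hk : 2 ≤ k) (hδ : 0 ≤ δ) (hW : (N : ℝ) < W)
    (hM : ∀ a ∈ M, ∀ t, a t ≤ N) :
    Maximal (· ∈ reductionPoints δ W N k M U j) (gammaPt W k j) := by
  refine maximal_iff.2 ⟨mem_reductionPoints.2 (Or.inr (Or.inr rfl)), fun q hq hpq => ?_⟩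
  rcases mem_reductionPoints.1 hq with ⟨b, hb, rfl⟩ | hq | rfl
  · exact absurd hpq (not_gammaPt_le_phiPt hk hδ hW (hM b hb))
  · obtain ⟨i, hi, j', hj', rfl⟩ := mem_betaPoints.1 hq
    simp only [mem_sdiff, mem_Icc] at hi hj'
    exact absurd hpq (not_gammaPt_le_betaPt hW hi.1 (by omega) hj'.1.2)
  · rfl

lemma maximal_phiPt_iff (hk : 2 ≤ k) (hδ : 0 < δ) (hδN : δ * N < 1) (hW : (N : ℝ) < W)
    (hM : ∀ a ∈ M, ∀ t, a t ∈ Icc 1 N) {a : Fin k → ℕ} (ha : a ∈ M) :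
    Maximal (· ∈ reductionPoints δ W N k M U j) (phiPt δ N k a) ↔
      InQueryBox U j (by omega) a := by
  have hMN : ∀ b ∈ M, ∀ t, b t ≤ N := fun b hb t => (mem_Icc.1 (hM b hb t)).2
  constructor
  · intro hmax
    refine ⟨fun t ht => ?_, ?_⟩
    · by_contra hU
      have hβ : betaPt W N k (t.1 + 1) (a t) ∈ reductionPoints δ W N k M U j :=
        mem_reductionPoints.2 <| Or.inr <| Or.inl <| mem_betaPoints.2
          ⟨t.1 + 1, mem_Icc.2 ⟨by omega, ht⟩, a t, mem_sdiff.2 ⟨hM a ha t, hU⟩, rfl⟩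
      have hle :=
        (phiPt_le_betaPt_iff hδ.le hδN hW.le (hMN a ha) (t := t) rfl (by omega)).2 rfl
      exact not_betaPt_le_phiPt hδ.le hW (by omega) (hMN a ha) (hmax.eq_of_le hβ hle).ge
    · by_contra! hj
      have hγ : gammaPt W k j ∈ reductionPoints δ W N k M U j :=
        mem_reductionPoints.2 (Or.inr (Or.inr rfl))
      have hle := (phiPt_le_gammaPt_iff hk hδ.le hW.le (hMN a ha)).2 hj
      exact not_gammaPt_le_phiPt hk hδ.le hW (hMN a ha) (hmax.eq_of_le hγ hle).ge
  · rintro ⟨hU, hj⟩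
    refine maximal_iff.2 ⟨mem_reductionPoints.2 (Or.inl ⟨a, ha, rfl⟩), fun q hq hle => ?_⟩
    rcases mem_reductionPoints.1 hq with ⟨b, hb, rfl⟩ | hq | rfl
    · rw [eq_of_phiPt_le_phiPt hk hδ hle]
    · obtain ⟨i, hi, j', hj', rfl⟩ := mem_betaPoints.1 hq
      rw [mem_Icc] at hi
      have hj'a := (phiPt_le_betaPt_iff hδ.le hδN hW.le (hMN a ha)
        (t := ⟨i - 1, by omega⟩) (by simp; omega) (by omega)).1 hle
      have := hU ⟨i - 1, by omega⟩ (by simp; omega)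
      simp only [show i - 1 + 1 = i by omega] at this
      exact absurd (hj'a ▸ this) (mem_sdiff.1 hj').2
    · exact absurd ((phiPt_le_gammaPt_iff hk hδ.le hW.le (hMN a ha)).1 hle) (not_le.2 hj)

end Skyline

section Counting

variable {δ W : ℝ} {N k j : ℕ} {M : Finset (Fin k → ℕ)} {U : ℕ → Finset ℕ}

lemma setOf_maximal_reductionPoints (hk : 2 ≤ k) (hδ : 0 < δ) (hδN : δ * N < 1)
    (hW : (N : ℝ) < W) (hj : j ≤ N) (hM : ∀ a ∈ M, ∀ t, a t ∈ Icc 1 N) :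
    {p | Maximal (· ∈ reductionPoints δ W N k M U j) p} =
      ↑(betaPoints W N k U ∪ {gammaPt W k j} ∪
        (M.filter (InQueryBox U j (by omega))).image (phiPt δ N k)) := by
  have hMN : ∀ a ∈ M, ∀ t, a t ≤ N := fun a ha t => (mem_Icc.1 (hM a ha t)).2
  ext p
  simp only [Set.mem_ofPred_eq, coe_union, coe_singleton, coe_image, coe_filter, Set.mem_union,
    Set.mem_singleton_iff, Set.mem_image]
  constructor
  · intro hp
    rcases mem_reductionPoints.1 hp.prop with ⟨a, ha, rfl⟩ | hβ | rfl
    · exact Or.inr ⟨a, ⟨ha, (maximal_phiPt_iff hk hδ hδN hW hM ha).1 hp⟩, rfl⟩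
    · exact Or.inl (Or.inl hβ)
    · exact Or.inl (Or.inr rfl)
  · rintro ((hβ | rfl) | ⟨a, ⟨ha, hbox⟩, rfl⟩)
    · exact maximal_of_mem_betaPoints hδ.le hW hj hMN hβ
    · exact maximal_gammaPt hk hδ.le hW hMN
    · exact (maximal_phiPt_iff hk hδ hδN hW hM ha).2 hbox

lemma card_betaPoints (hW : (N : ℝ) < W) (hU : ∀ i, U i ⊆ Icc 1 N) :
    #(betaPoints W N k U) = ∑ i ∈ Icc 1 (k - 1), (N - #(U i)) := by
  rw [betaPoints, card_biUnion]
  · refine sum_congr rfl fun i hi => ?_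
    rw [mem_Icc] at hi
    rw [card_image_of_injOn, card_sdiff_of_subset (hU i), Nat.card_Icc, Nat.add_sub_cancel]
    intro x _ y hy hxy
    simp only [coe_sdiff, coe_Icc, Set.mem_sdiff, Set.mem_Icc] at hy
    exact (eq_of_betaPt_le_betaPt hW hi.1 (by omega) hy.1.2 hxy.le).2
  · intro i _ i' hi' hne
    simp only [coe_Icc, Set.mem_Icc] at hi'
    simp only [Function.onFun, disjoint_left, mem_image, mem_sdiff, mem_Icc]
    rintro p ⟨x, -, rfl⟩ ⟨y, hy, hxy⟩
    exact hne (eq_of_betaPt_le_betaPt hW hi'.1 (by omega) hy.1.2 hxy.ge).1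

lemma gammaPt_notMem_betaPoints (hW : (N : ℝ) < W) (hj : j ≤ N) :
    gammaPt W k j ∉ betaPoints W N k U := fun h => by
  obtain ⟨i, hi, j', -, hγ⟩ := mem_betaPoints.1 h
  exact not_betaPt_le_gammaPt hW hj (by rw [mem_Icc] at hi; omega) hγ.le

lemma phiPt_notMem_betaPoints (hδ : 0 ≤ δ) (hW : (N : ℝ) < W) {a : Fin k → ℕ}
    (ha : ∀ t, a t ≤ N) : phiPt δ N k a ∉ betaPoints W N k U := fun h => by
  obtain ⟨i, hi, j', -, hφ⟩ := mem_betaPoints.1 h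
  exact not_betaPt_le_phiPt hδ hW (by rw [mem_Icc] at hi; omega) ha hφ.le

lemma ncard_setOf_maximal_reductionPoints (hk : 2 ≤ k) (hδ : 0 < δ) (hδN : δ * N < 1)
    (hW : (N : ℝ) < W) (hj : j ≤ N) (hM : ∀ a ∈ M, ∀ t, a t ∈ Icc 1 N)
    (hU : ∀ i, U i ⊆ Icc 1 N) :
    {p | Maximal (· ∈ reductionPoints δ W N k M U j) p}.ncard =
      ∑ i ∈ Icc 1 (k - 1), (N - #(U i)) + 1 + #(M.filter (InQueryBox U j (by omega))) := by
  have hMN : ∀ a ∈ M, ∀ t, a t ≤ N := fun a ha t => (mem_Icc.1 (hM a ha t)).2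
  have hdisj₁ : Disjoint (betaPoints W N k U) {gammaPt W k j} :=
    disjoint_singleton_right.2 (gammaPt_notMem_betaPoints hW hj)
  have hdisj₂ : Disjoint (betaPoints W N k U ∪ {gammaPt W k j})
      ((M.filter (InQueryBox U j (by omega))).image (phiPt δ N k)) := by
    simp only [disjoint_right, mem_image, mem_filter, mem_union, mem_singleton]
    rintro _ ⟨a, ⟨ha, -⟩, rfl⟩ (hβ | hγ)
    exacts [phiPt_notMem_betaPoints hδ.le hW (hMN a ha) hβ,
      not_gammaPt_le_phiPt hk hδ.le hW (hMN a ha) hγ.ge]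
  rw [setOf_maximal_reductionPoints hk hδ hδN hW hj hM, Set.ncard_coe_finset,
    card_union_of_disjoint hdisj₂, card_union_of_disjoint hdisj₁, card_singleton,
    card_betaPoints hW hU,
    card_image_of_injOn fun a _ b _ hab => eq_of_phiPt_le_phiPt hk hδ hab.le]

end Counting

/-- Counting the maximal (skyline) points in the point set arising in the reduction
from OuMv_k to Dynamic Skyline Points Counting in `ℝ^{2k-1}`. -/
theorem skyline_count_core (k N : ℕ) (hk : 2 ≤ k)
    (δ : ℝ) (hδ : 0 < δ) (hδN : δ * N < 1)
    (W : ℝ) (hW : (N : ℝ) < W)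
    (M : Finset (Fin k → ℕ)) (hM : ∀ a ∈ M, ∀ i, a i ∈ Finset.Icc 1 N)
    (U : ℕ → Finset ℕ) (hU : ∀ i, U i ⊆ Finset.Icc 1 N)
    (j : ℕ) (hj : j ≤ N)
    (P : Finset (Fin (2 * k - 1) → ℝ))
    (hP : P = M.image (phiPt δ N k) ∪
        (Finset.Icc 1 (k - 1)).biUnion
          (fun i => (Finset.Icc 1 N \ U i).image (fun j' => betaPt W N k i j')) ∪
        {gammaPt W k j}) :
    {p : Fin (2 * k - 1) → ℝ | p ∈ P ∧ ∀ q ∈ P, q ≠ p → ¬ ∀ m, p m ≤ q m}.ncard =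
      (∑ i ∈ Finset.Icc 1 (k - 1), (N - (U i).card)) + 1 +
        {a : Fin k → ℕ | a ∈ M ∧
          (∀ i : Fin k, (i : ℕ) + 1 ≤ k - 1 → a i ∈ U ((i : ℕ) + 1)) ∧
          j < a ⟨k - 1, by omega⟩}.ncard := by
  obtain rfl : P = reductionPoints δ W N k M U j := hP
  have hbox : {a : Fin k → ℕ | a ∈ M ∧
      (∀ i : Fin k, (i : ℕ) + 1 ≤ k - 1 → a i ∈ U ((i : ℕ) + 1)) ∧ j < a ⟨k - 1, by omega⟩} =
      ↑(M.filter (InQueryBox U j (by omega))) := by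
    ext a
    simp [InQueryBox]
  rw [hbox, Set.ncard_coe_finset, ← ncard_setOf_maximal_reductionPoints hk hδ hδN hW hj hM hU]
  exact congrArg Set.ncard (Set.ext fun _ => maximal_iff_forall_ne_not_le.symm)
end

section
/- Let N ≥ 1 and k ≥ 1 be integers and let U_1, …, U_k ⊆ {1,…,N}. For each i ∈ {1,…,k} and j ∈ U_i consider the two open halfspaces H⁻_{i,j} = {x ∈ ℝ^k : x_i < j − 1/2} and H⁺_{i,j} = {x ∈ ℝ^k : x_i > j + 1/2}. For an integer point a ∈ {1,…,N}^k (viewed as a point of ℝ^k), let c(a) be the number of these halfspaces that contain a. Then (a) c(a) = Σ_{i=1}^{k} |U_i| − |{i ∈ {1,…,k} : a_i ∈ U_i}|; and (b) for every nonempty finite M ⊆ {1,…,N}^k, the minimum of c(a) over a ∈ M equals Σ_{i=1}^{k} |U_i| − k if and only if there exists a ∈ M with a_i ∈ U_i for every i ∈ {1,…,k}. -/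
/-!
In coordinate `i`, an integer point `a` lies in exactly one halfspace of each pair
`H⁻_{i,j}, H⁺_{i,j}` with `j ≠ a i` and in neither when `j = a i`, a pair that exists iff
`a i ∈ U i`; so `c a = Σ_i |U i| − #{i | a i ∈ U i}`.
Hence `c ≥ Σ_i |U i| − k` on all of `M`, with equality precisely at the points of
`M ∩ (U 1 × ⋯ × U k)`.
-/

open Finset

/-- The threshold `1/2` separates the integer `a` from every integer `j ≠ a`. -/
lemma halfspace_pair_count (a j : ℕ) :
    ((if (a : ℝ) < (j : ℝ) - 1 / 2 then 1 else 0) +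
      (if (j : ℝ) + 1 / 2 < (a : ℝ) then 1 else 0) : ℕ) = if a = j then 0 else 1 := by
  rcases lt_trichotomy a j with h | rfl | h
  · have h' : (a : ℝ) + 1 ≤ j := by exact_mod_cast h
    rw [if_pos (by linarith), if_neg (by linarith), if_neg h.ne]
  · rw [if_neg (by linarith), if_neg (by linarith), if_pos rfl]
  · have h' : (j : ℝ) + 1 ≤ a := by exact_mod_cast h
    rw [if_neg (by linarith), if_pos (by linarith), if_neg h.ne']

lemma sum_ite_eq_zero_one_add_ite_mem {α : Type*} [DecidableEq α] (s : Finset α) (a : α) :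
    (∑ j ∈ s, if a = j then 0 else 1) + (if a ∈ s then 1 else 0) = #s := by
  rw [← sum_ite_eq s a (fun _ => 1), ← sum_add_distrib, card_eq_sum_ones]
  exact sum_congr rfl fun j _ => by split_ifs <;> rfl

lemma halfspace_count_add_card_filter_mem {ι : Type*} [Fintype ι] (U : ι → Finset ℕ)
    (a : ι → ℕ) :
    (∑ i, ∑ j ∈ U i, ((if (a i : ℝ) < (j : ℝ) - 1 / 2 then 1 else 0) +
        (if (j : ℝ) + 1 / 2 < (a i : ℝ) then 1 else 0))) + #{i | a i ∈ U i} =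
      ∑ i, #(U i) := by
  simp only [halfspace_pair_count, card_filter, ← sum_add_distrib,
    sum_ite_eq_zero_one_add_ite_mem]

lemma Finset.inf'_eq_iff_exists_eq_of_le {α β : Type*} [LinearOrder β] {s : Finset α}
    (H : s.Nonempty) {f : α → β} {m : β} (hm : ∀ a ∈ s, m ≤ f a) :
    s.inf' H f = m ↔ ∃ a ∈ s, f a = m := by
  constructor
  · intro h
    obtain ⟨a, ha, hfa⟩ := exists_mem_eq_inf' H f
    exact ⟨a, ha, hfa ▸ h⟩
  · rintro ⟨a, ha, rfl⟩
    exact le_antisymm (inf'_le f ha) ((le_inf'_iff H f).2 hm)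

theorem chans_halfspace_core_general (N k : ℕ)
    (U : Fin k → Finset ℕ)
    (c : (Fin k → ℕ) → ℕ)
    (hc : ∀ a : Fin k → ℕ, c a = ∑ i : Fin k, ∑ j ∈ U i,
        ((if (a i : ℝ) < (j : ℝ) - 1 / 2 then 1 else 0) +
          (if (j : ℝ) + 1 / 2 < (a i : ℝ) then 1 else 0))) :
    (∀ a : Fin k → ℕ, (∀ i, a i ∈ Finset.Icc 1 N) →
        (c a : ℤ) = (∑ i : Fin k, ((U i).card : ℤ)) -
          ((Finset.univ.filter (fun i => a i ∈ U i)).card : ℤ)) ∧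
      (∀ M : Finset (Fin k → ℕ), ∀ hMne : M.Nonempty,
        (∀ a ∈ M, ∀ i, a i ∈ Finset.Icc 1 N) →
        (((M.inf' hMne c : ℕ) : ℤ) = (∑ i : Fin k, ((U i).card : ℤ)) - (k : ℤ) ↔
          ∃ a ∈ M, ∀ i, a i ∈ U i)) := by
  have count (a : Fin k → ℕ) : (c a : ℤ) = (∑ i, (#(U i) : ℤ)) - #{i | a i ∈ U i} := by
    have := halfspace_count_add_card_filter_mem U a
    rw [← hc] at this
    rw [eq_sub_iff_add_eq]
    exact_mod_cast this
  refine ⟨fun a _ => count a, fun M hMne _ => ?_⟩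
  have full_iff (a : Fin k → ℕ) : #{i | a i ∈ U i} = k ↔ ∀ i, a i ∈ U i := by
    simpa using card_filter_eq_iff (s := univ) (p := fun i => a i ∈ U i)
  rw [Nat.cast_finsetInf', Finset.inf'_eq_iff_exists_eq_of_le]
  · refine exists_congr fun a => and_congr_right fun _ => ?_
    rw [count, ← full_iff]
    omega
  · intro a _
    have := card_filter_le (univ : Finset (Fin k)) (fun i => a i ∈ U i)
    rw [card_univ, Fintype.card_fin] at this
    rw [count]
    omega

/-- Correctness core of the reduction from OuMv_k to Chan's Halfspace problem in `ℝ^k`: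
`c a` counts, over `i ∈ {1,…,k}` and `j ∈ U i`, the open halfspaces
`{x : x i < j - 1/2}` and `{x : x i > j + 1/2}` containing the integer point `a`.
(a) `c a = Σ_i |U i| − |{i : a i ∈ U i}|`; (b) for nonempty finite `M ⊆ {1,…,N}^k`,
`min_{a ∈ M} c a = Σ_i |U i| − k` iff some `a ∈ M` has `a i ∈ U i` for every `i`. -/
theorem chans_halfspace_core (N k : ℕ) (hN : 1 ≤ N) (hk : 1 ≤ k)
    (U : Fin k → Finset ℕ) (hU : ∀ i, U i ⊆ Finset.Icc 1 N)
    (c : (Fin k → ℕ) → ℕ)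
    (hc : ∀ a : Fin k → ℕ, c a = ∑ i : Fin k, ∑ j ∈ U i,
        ((if (a i : ℝ) < (j : ℝ) - 1 / 2 then 1 else 0) +
          (if (j : ℝ) + 1 / 2 < (a i : ℝ) then 1 else 0))) :
    (∀ a : Fin k → ℕ, (∀ i, a i ∈ Finset.Icc 1 N) →
        (c a : ℤ) = (∑ i : Fin k, ((U i).card : ℤ)) -
          ((Finset.univ.filter (fun i => a i ∈ U i)).card : ℤ)) ∧
      (∀ M : Finset (Fin k → ℕ), ∀ hMne : M.Nonempty,
        (∀ a ∈ M, ∀ i, a i ∈ Finset.Icc 1 N) →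
        (((M.inf' hMne c : ℕ) : ℤ) = (∑ i : Fin k, ((U i).card : ℤ)) - (k : ℤ) ↔
          ∃ a ∈ M, ∀ i, a i ∈ U i)) :=
  chans_halfspace_core_general N k U c hc
end

section
/- Let k ≥ 2 and N ≥ 1 be integers, let M ⊆ {1,…,N}^k, and let U_1, …, U_k ⊆ {1,…,N}. Consider the vertex set V = {s} ∪ ({1,…,N} × {1,…,k}), where s is a distinguished vertex not of the form (a, i). Let E be the collection of k-element subsets of V consisting of: (i) for each (a_1,…,a_k) ∈ M, the set {(a_1,1), (a_2,2), …, (a_k,k)}; and (ii) for each i ∈ {1,…,k} and each choice of elements a_t ∈ U_t for every t ∈ {1,…,k} ∖ {i}, the set {s} ∪ {(a_t, t) : t ∈ {1,…,k} ∖ {i}}. Then there exists a (k+1)-element set S ⊆ V with s ∈ S such that every k-element subset of S belongs to E, if and only if there exists (a_1,…,a_k) ∈ M with a_i ∈ U_i for every i ∈ {1,…,k}. -/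
/-!
Every `k`-subset of a `(k+1)`-set `S` is `S` minus one vertex. If `s ∈ S`, then `S ∖ {s}` avoids
`s`, so it is a type (i) hyperedge and `S = {s} ∪ {(a_t, t)}` for some `a ∈ M`. Removing instead a
vertex `(a_j, j)` with `j ≠ i` (one exists as `k ≥ 2`) leaves a set containing `s`, i.e. a type (ii)
hyperedge, and its vertex `(a_i, i)` forces `a_i ∈ U_i`. Conversely, for `a ∈ M` with `a_i ∈ U_i`
for all `i`, the set `{s} ∪ {(a_t, t)}` is a hyperclique: dropping `s` gives a type (i) hyperedge
and dropping `(a_i, i)` a type (ii) one.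
-/

open Finset

namespace Finset

theorem forall_subset_card_eq_mem_iff {α : Type*} [DecidableEq α] {S : Finset α} {k : ℕ}
    {E : Set (Finset α)} (hS : #S = k + 1) :
    (∀ e ⊆ S, #e = k → e ∈ E) ↔ ∀ v ∈ S, S.erase v ∈ E := by
  constructor
  · intro h v hv
    exact h _ (erase_subset v S) (by rw [card_erase_of_mem hv, hS, Nat.add_sub_cancel])
  · intro h e he hcard
    obtain ⟨v, hve, hSe⟩ := exists_eq_insert_iff.2 ⟨he, by rw [hcard, hS]⟩
    simpa only [← hSe, erase_insert hve] using h v (hSe ▸ mem_insert_self v e)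

end Finset

namespace HypercliqueReduction

variable {k : ℕ}

/-- Layers are numbered from `1`, while `Fin k` starts at `0`. -/
def tupleVertices (a : Fin k → ℕ) (s : Finset (Fin k)) : Finset (Option (ℕ × ℕ)) :=
  s.image fun t => some (a t, (t : ℕ) + 1)

/-- The hyperedges of types (i) and (ii); the distinguished vertex `s` is `none`. -/
def edges (M : Finset (Fin k → ℕ)) (U : Fin k → Finset ℕ) : Set (Finset (Option (ℕ × ℕ))) :=
  {e | ∃ a ∈ M, e = tupleVertices a univ} ∪
    {e | ∃ i : Fin k, ∃ a : Fin k → ℕ, (∀ t, t ≠ i → a t ∈ U t) ∧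
      e = insert none (tupleVertices a (univ.erase i))}

theorem some_injective (a : Fin k → ℕ) :
    Function.Injective fun t : Fin k => (some (a t, (t : ℕ) + 1) : Option (ℕ × ℕ)) := by
  intro t t' h
  simp only [Option.some.injEq, Prod.mk.injEq] at h
  exact Fin.ext (by omega)

theorem some_mem_tupleVertices {a : Fin k → ℕ} {s : Finset (Fin k)} {t : Fin k} {x : ℕ} :
    some (x, (t : ℕ) + 1) ∈ tupleVertices a s ↔ t ∈ s ∧ a t = x := by
  simp only [tupleVertices, mem_image, Option.some.injEq, Prod.mk.injEq, Nat.add_right_cancel_iff,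
    Fin.val_inj]
  constructor
  · rintro ⟨t', ht', hx, rfl⟩
    exact ⟨ht', hx⟩
  · rintro ⟨ht, hx⟩
    exact ⟨t, ht, hx, rfl⟩

theorem none_notMem_tupleVertices (a : Fin k → ℕ) (s : Finset (Fin k)) :
    none ∉ tupleVertices a s := by
  simp [tupleVertices]

theorem tupleVertices_erase (a : Fin k → ℕ) (s : Finset (Fin k)) (t : Fin k) :
    tupleVertices a (s.erase t) = (tupleVertices a s).erase (some (a t, (t : ℕ) + 1)) :=
  image_erase (some_injective a) s t

theorem card_insert_none_tupleVertices_univ (a : Fin k → ℕ) :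
    #(insert none (tupleVertices a univ)) = k + 1 := by
  rw [card_insert_of_notMem (none_notMem_tupleVertices a univ), tupleVertices,
    card_image_of_injective _ (some_injective a), card_univ, Fintype.card_fin]

theorem mem_insert_none_tupleVertices_univ {N : ℕ} {a : Fin k → ℕ}
    (ha : ∀ i, a i ∈ Icc 1 N) {v : Option (ℕ × ℕ)} (hv : v ∈ insert none (tupleVertices a univ)) :
    v = none ∨ ∃ p : ℕ × ℕ, v = some p ∧ p.1 ∈ Icc 1 N ∧ p.2 ∈ Icc 1 k := by
  rcases mem_insert.1 hv with rfl | hv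
  · exact Or.inl rfl
  · obtain ⟨t, -, rfl⟩ := mem_image.1 hv
    exact Or.inr ⟨_, rfl, ha t, mem_Icc.2 ⟨by omega, by omega⟩⟩

section Edges

variable {M : Finset (Fin k → ℕ)} {U : Fin k → Finset ℕ} {e : Finset (Option (ℕ × ℕ))}

theorem exists_mem_eq_tupleVertices_of_mem_edges (he : e ∈ edges M U) (hs : none ∉ e) :
    ∃ a ∈ M, e = tupleVertices a univ := by
  rcases he with he | ⟨i, a, -, rfl⟩
  · exact he
  · exact absurd (mem_insert_self _ _) hs

theorem mem_of_some_mem_of_mem_edges (he : e ∈ edges M U) (hs : none ∈ e) {t : Fin k} {x : ℕ}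
    (hx : some (x, (t : ℕ) + 1) ∈ e) : x ∈ U t := by
  rcases he with ⟨a, -, rfl⟩ | ⟨i, a, haU, rfl⟩
  · exact absurd hs (none_notMem_tupleVertices a univ)
  · obtain ⟨ht, rfl⟩ := some_mem_tupleVertices.1 ((mem_insert.1 hx).resolve_left (by simp))
    exact haU t (ne_of_mem_erase ht)

theorem exists_mem_forall_mem_of_erase_mem_edges (hk : 2 ≤ k) {S : Finset (Option (ℕ × ℕ))}
    (hs : none ∈ S) (hS : ∀ v ∈ S, S.erase v ∈ edges M U) : ∃ a ∈ M, ∀ i, a i ∈ U i := by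
  obtain ⟨a, haM, ha⟩ :=
    exists_mem_eq_tupleVertices_of_mem_edges (hS none hs) (notMem_erase none S)
  have hmem : ∀ t, some (a t, (t : ℕ) + 1) ∈ S := fun t => by
    rw [← insert_erase hs, ha]
    exact mem_insert_of_mem (some_mem_tupleVertices.2 ⟨mem_univ t, rfl⟩)
  refine ⟨a, haM, fun i => ?_⟩
  have : Nontrivial (Fin k) := Fin.nontrivial_iff_two_le.2 hk
  obtain ⟨j, hji⟩ := exists_ne i
  exact mem_of_some_mem_of_mem_edges (hS _ (hmem j)) (mem_erase.2 ⟨by simp, hs⟩)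
    (mem_erase.2 ⟨(some_injective a).ne hji.symm, hmem i⟩)

theorem erase_mem_edges {a : Fin k → ℕ} (haM : a ∈ M) (haU : ∀ i, a i ∈ U i) :
    ∀ v ∈ insert none (tupleVertices a univ),
      (insert none (tupleVertices a univ)).erase v ∈ edges M U := by
  intro v hv
  rcases mem_insert.1 hv with rfl | hv
  · exact Or.inl ⟨a, haM, erase_insert (none_notMem_tupleVertices a univ)⟩
  · obtain ⟨t, -, rfl⟩ := mem_image.1 hv
    exact Or.inr ⟨t, a, fun t _ => haU t,
      by rw [erase_insert_of_ne (by simp), tupleVertices_erase]⟩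

end Edges

end HypercliqueReduction

open HypercliqueReduction

theorem hyperclique_core_general (k N : ℕ) (hk : 2 ≤ k)
    (M : Finset (Fin k → ℕ)) (hM : ∀ a ∈ M, ∀ i, a i ∈ Finset.Icc 1 N)
    (U : Fin k → Finset ℕ)
    (E : Set (Finset (Option (ℕ × ℕ))))
    (hE : E = {e | ∃ a ∈ M,
          e = Finset.image (fun t : Fin k => some (a t, (t : ℕ) + 1)) Finset.univ} ∪
        {e | ∃ i : Fin k, ∃ a : Fin k → ℕ, (∀ t, t ≠ i → a t ∈ U t) ∧
          e = insert none
            ((Finset.univ.erase i).image (fun t : Fin k => some (a t, (t : ℕ) + 1)))}) :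
    (∃ S : Finset (Option (ℕ × ℕ)), S.card = k + 1 ∧ none ∈ S ∧
        (∀ v ∈ S, v = none ∨
          ∃ p : ℕ × ℕ, v = some p ∧ p.1 ∈ Finset.Icc 1 N ∧ p.2 ∈ Finset.Icc 1 k) ∧
        ∀ e : Finset (Option (ℕ × ℕ)), e ⊆ S → e.card = k → e ∈ E) ↔
      ∃ a ∈ M, ∀ i, a i ∈ U i := by
  change E = edges M U at hE
  subst hE
  constructor
  · rintro ⟨S, hcard, hs, -, hS⟩
    exact exists_mem_forall_mem_of_erase_mem_edges hk hs
      ((forall_subset_card_eq_mem_iff hcard).1 hS)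
  · rintro ⟨a, haM, haU⟩
    have hcard := card_insert_none_tupleVertices_univ a
    exact ⟨_, hcard, mem_insert_self _ _,
      fun _ hv => mem_insert_none_tupleVertices_univ (hM a haM) hv,
      (forall_subset_card_eq_mem_iff hcard).2 (erase_mem_edges haM haU)⟩

/-- Correctness core of the reduction from OuMv_k to the Dynamic s-k-Uniform
(k+1)-Hyperclique problem. Vertices are `none` (the distinguished vertex `s`) and
`some (a, i)` for `a ∈ {1,…,N}`, `i ∈ {1,…,k}`. The hyperedge set `E` consists of
(i) `{(a₁,1),…,(a_k,k)}` for `a ∈ M`, and (ii) `{s} ∪ {(a_t,t) : t ≠ i}` for every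
`i ∈ {1,…,k}` and every choice `a_t ∈ U t` (`t ≠ i`). Then `s` lies in a
(k+1)-hyperclique iff `M` meets `U 1 × ⋯ × U k`. -/
theorem hyperclique_core (k N : ℕ) (hk : 2 ≤ k) (hN : 1 ≤ N)
    (M : Finset (Fin k → ℕ)) (hM : ∀ a ∈ M, ∀ i, a i ∈ Finset.Icc 1 N)
    (U : Fin k → Finset ℕ) (hU : ∀ i, U i ⊆ Finset.Icc 1 N)
    (E : Set (Finset (Option (ℕ × ℕ))))
    (hE : E = {e | ∃ a ∈ M,
          e = Finset.image (fun t : Fin k => some (a t, (t : ℕ) + 1)) Finset.univ} ∪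
        {e | ∃ i : Fin k, ∃ a : Fin k → ℕ, (∀ t, t ≠ i → a t ∈ U t) ∧
          e = insert none
            ((Finset.univ.erase i).image (fun t : Fin k => some (a t, (t : ℕ) + 1)))}) :
    (∃ S : Finset (Option (ℕ × ℕ)), S.card = k + 1 ∧ none ∈ S ∧
        (∀ v ∈ S, v = none ∨
          ∃ p : ℕ × ℕ, v = some p ∧ p.1 ∈ Finset.Icc 1 N ∧ p.2 ∈ Finset.Icc 1 k) ∧
        ∀ e : Finset (Option (ℕ × ℕ)), e ⊆ S → e.card = k → e ∈ E) ↔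
      ∃ a ∈ M, ∀ i, a i ∈ U i :=
  hyperclique_core_general k N hk M hM U E hE
end

section
/- Let A, B, C be finite sets and let R_BA ⊆ B × A and R_AC ⊆ A × C be relations. Define a simple undirected graph G on the vertex set consisting of two distinguished vertices s and t together with five pairwise disjoint layers: a copy V_B of B (writing b^{V_B} for the copy of b ∈ B), copies U_B, U_D, U_C of A (writing a^{U_B}, a^{U_D}, a^{U_C} for the copies of a ∈ A), and a copy V_C of C (writing c^{V_C} for the copy of c ∈ C). The edges of G are: {s, b^{V_B}} for every b ∈ B; {c^{V_C}, t} for every c ∈ C; {b^{V_B}, a^{U_B}} exactly when (b,a) ∈ R_BA; {a^{U_C}, c^{V_C}} exactly when (a,c) ∈ R_AC; and {a^{U_B}, a^{U_D}} and {a^{U_D}, a^{U_C}} for every a ∈ A. Then for every vertex subset S containing s, t, and all vertices of U_B and U_C, the vertices s and t are connected in the subgraph of G induced by S if and only if there exist a ∈ A, b ∈ B, c ∈ C such that b^{V_B} ∈ S, a^{U_D} ∈ S, c^{V_C} ∈ S, (b,a) ∈ R_BA, and (a,c) ∈ R_AC. -/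
/-- The vertex set of the st-SubConn reduction graph: distinguished vertices `s`, `t`,
a layer `V_B` (copies of `B`), layers `U_B`, `U_D`, `U_C` (copies of `A`), and a layer
`V_C` (copies of `C`). -/
inductive SubConnVertex (A B C : Type*) where
  | s : SubConnVertex A B C
  | t : SubConnVertex A B C
  | vB : B → SubConnVertex A B C
  | uB : A → SubConnVertex A B C
  | uD : A → SubConnVertex A B C
  | uC : A → SubConnVertex A B C
  | vC : C → SubConnVertex A B C

/-- The (oriented) base edge relation of the st-SubConn reduction graph. -/
def subConnE0 {A B C : Type*} (RBA : B → A → Prop) (RAC : A → C → Prop) :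
    SubConnVertex A B C → SubConnVertex A B C → Prop
  | .s, .vB _ => True
  | .vC _, .t => True
  | .vB b, .uB a => RBA b a
  | .uC a, .vC c => RAC a c
  | .uB a, .uD a' => a = a'
  | .uD a, .uC a' => a = a'
  | _, _ => False

/-- The undirected st-SubConn reduction graph. -/
def subConnGraph {A B C : Type*} (RBA : B → A → Prop) (RAC : A → C → Prop) :
    SimpleGraph (SubConnVertex A B C) where
  Adj x y := x ≠ y ∧ (subConnE0 RBA RAC x y ∨ subConnE0 RBA RAC y x)
  symm := by
    constructor
    intro x y h
    exact ⟨h.1.symm, h.2.symm⟩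
  loopless := by
    constructor
    intro x h
    exact h.1 rfl

open SimpleGraph

theorem SimpleGraph.Reachable.of_adj_closed {V : Type*} {G : SimpleGraph V} {P : V → Prop}
    (hP : ∀ ⦃x y⦄, G.Adj x y → P x → P y) {u v : V} (h : G.Reachable u v) (hu : P u) :
    P v := by
  obtain ⟨w⟩ := h
  induction w with
  | nil => exact hu
  | cons hadj _ ih => exact ih (hP hadj hu)

theorem SimpleGraph.Adj.reachable_induce {V : Type*} {G : SimpleGraph V} {S : Set V}
    {x y : V} (hx : x ∈ S) (hy : y ∈ S) (h : G.Adj x y) :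
    (G.induce S).Reachable ⟨x, hx⟩ ⟨y, hy⟩ :=
  Adj.reachable (G := G.induce S) h

namespace SubConnVertex

variable {A B C : Type*} {RBA : B → A → Prop} {RAC : A → C → Prop}
  {S : Set (SubConnVertex A B C)}

/-- Without a witness triple, the component of `s` in `G[S]` stays inside this set, which
misses `t`. -/
def OnSSide (RBA : B → A → Prop) (S : Set (SubConnVertex A B C)) :
    SubConnVertex A B C → Prop
  | .s | .vB _ => True
  | .uB a | .uD a => ∃ b, vB b ∈ S ∧ RBA b a
  | .uC a => uD a ∈ S ∧ ∃ b, vB b ∈ S ∧ RBA b a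
  | .t | .vC _ => False

theorem onSSide_of_adj
    (hno : ∀ (a : A) (b : B) (c : C),
      vB b ∈ S → uD a ∈ S → vC c ∈ S → RBA b a → ¬RAC a c)
    {x y : SubConnVertex A B C} (hx : x ∈ S) (hy : y ∈ S)
    (hxy : (subConnGraph RBA RAC).Adj x y) (h : OnSSide RBA S x) : OnSSide RBA S y := by
  obtain ⟨-, e | e⟩ := hxy <;> cases x <;> cases y <;>
    simp only [subConnE0, OnSSide] at e h ⊢
  case inl.vB.uB => exact ⟨_, hx, e⟩
  case inl.uB.uD => exact e ▸ h
  case inl.uD.uC => exact e ▸ ⟨hx, h⟩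
  case inl.uC.vC => exact h.2.elim fun b ⟨hb, hba⟩ ↦ hno _ b _ hb h.1 hy hba e
  case inr.uD.uB => exact e ▸ h
  case inr.uC.uD => exact e ▸ h.2

theorem exists_witness_of_reachable (hs : s ∈ S) (ht : t ∈ S)
    (h : ((subConnGraph RBA RAC).induce S).Reachable ⟨s, hs⟩ ⟨t, ht⟩) :
    ∃ (a : A) (b : B) (c : C), vB b ∈ S ∧ uD a ∈ S ∧ vC c ∈ S ∧ RBA b a ∧ RAC a c := by
  by_contra! hno
  exact h.of_adj_closed (P := fun v : S ↦ OnSSide RBA S v)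
    (fun x y hxy ↦ onSSide_of_adj hno x.2 y.2 hxy) trivial

theorem reachable_of_witness (hs : s ∈ S) (ht : t ∈ S) {a : A} {b : B} {c : C}
    (hb : vB b ∈ S) (hB : uB a ∈ S) (hd : uD a ∈ S) (hC : uC a ∈ S) (hc : vC c ∈ S)
    (hba : RBA b a) (hac : RAC a c) :
    ((subConnGraph RBA RAC).induce S).Reachable ⟨s, hs⟩ ⟨t, ht⟩ := by
  have step {x y : SubConnVertex A B C} (hx : x ∈ S) (hy : y ∈ S) (hne : x ≠ y)
      (e : subConnE0 RBA RAC x y) :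
      ((subConnGraph RBA RAC).induce S).Reachable ⟨x, hx⟩ ⟨y, hy⟩ :=
    Adj.reachable_induce hx hy ⟨hne, .inl e⟩
  exact (step hs hb (by simp) trivial).trans <| (step hb hB (by simp) hba).trans <|
    (step hB hd (by simp) rfl).trans <| (step hd hC (by simp) rfl).trans <|
    (step hC hc (by simp) hac).trans (step hc ht (by simp) trivial)

end SubConnVertex

theorem subConn_core_general {A B C : Type*}
    (RBA : B → A → Prop) (RAC : A → C → Prop)
    (S : Set (SubConnVertex A B C))
    (hs : SubConnVertex.s ∈ S) (ht : SubConnVertex.t ∈ S)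
    (hUB : ∀ a : A, SubConnVertex.uB a ∈ S)
    (hUC : ∀ a : A, SubConnVertex.uC a ∈ S) :
    ((subConnGraph RBA RAC).induce S).Reachable
        ⟨SubConnVertex.s, hs⟩ ⟨SubConnVertex.t, ht⟩ ↔
      ∃ (a : A) (b : B) (c : C), SubConnVertex.vB b ∈ S ∧ SubConnVertex.uD a ∈ S ∧
        SubConnVertex.vC c ∈ S ∧ RBA b a ∧ RAC a c :=
  ⟨SubConnVertex.exists_witness_of_reachable hs ht, fun ⟨a, _, _, hb, hd, hc, hba, hac⟩ ↦
    SubConnVertex.reachable_of_witness hs ht hb (hUB a) hd (hUC a) hc hba hac⟩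

/-- Structural correctness of the reduction from 4-Clique Detection to st-SubConn:
for any vertex subset `S` containing `s`, `t` and all of `U_B ∪ U_C`, the vertices
`s` and `t` are connected in the subgraph induced by `S` iff there are `a, b, c` with
`b^{V_B}, a^{U_D}, c^{V_C} ∈ S`, `(b,a) ∈ R_BA` and `(a,c) ∈ R_AC`. -/
theorem subConn_core {A B C : Type*} [Fintype A] [Fintype B] [Fintype C]
    (RBA : B → A → Prop) (RAC : A → C → Prop)
    (S : Set (SubConnVertex A B C))
    (hs : SubConnVertex.s ∈ S) (ht : SubConnVertex.t ∈ S)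
    (hUB : ∀ a : A, SubConnVertex.uB a ∈ S)
    (hUC : ∀ a : A, SubConnVertex.uC a ∈ S) :
    ((subConnGraph RBA RAC).induce S).Reachable
        ⟨SubConnVertex.s, hs⟩ ⟨SubConnVertex.t, ht⟩ ↔
      ∃ (a : A) (b : B) (c : C), SubConnVertex.vB b ∈ S ∧ SubConnVertex.uD a ∈ S ∧
        SubConnVertex.vC c ∈ S ∧ RBA b a ∧ RAC a c :=
  subConn_core_general RBA RAC S hs ht hUB hUC
end

section
/- Let d ≥ 1, B ≥ 1 and N ≥ 1 be integers. For each a ∈ {1,…,N}^d let S_a : ℤ^d → ℤ be a function such that S_a(x) = 0 whenever some coordinate x_i satisfies x_i < 1 or x_i > B, and define A_a : ℤ^d → ℤ by A_a(y) = Σ_{b ∈ {0,1}^d} (−1)^{b_1 + ⋯ + b_d} · S_a(y − b). Define T : ℤ^d → ℤ by T((B+1)·(a − 𝟙) + y) = A_a(y) for every a ∈ {1,…,N}^d and every y with 1 ≤ y_i ≤ B+1 for all i (where 𝟙 = (1,…,1) and this decomposition of an index is unique), and T(x) = 0 for all x not of this form. Then for every a ∈ {1,…,N}^d and every y with 1 ≤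 y_i ≤ B+1 for all i: Σ_{x ∈ ℤ^d, 1 ≤ x_i ≤ (B+1)(a_i − 1) + y_i for all i} T(x) = S_a(y). -/
/-!
Let `G` be the sum over the blocks `a` of the translates of `S a` to block `a`. Since `S a`
vanishes outside `[1, B]^d`, its finite difference vanishes outside `[1, B + 1]^d`, so the
translated differences have disjoint supports and `T` is exactly the finite difference of `G`.
The prefix sum of a finite difference over `[1, M]` telescopes to the alternating sum of `G`
over the corners of `[0, M]`; every corner other than `M` has a zero coordinate, where `G`
vanishes, and `G M = S a y`.
-/

/-- The d-dimensional finite difference of `S : ℤ^d → ℤ`: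
`A y = Σ_{b ∈ {0,1}^d} (−1)^{b₁+⋯+b_d} S(y − b)`, with `b` encoded as the subset
`s ⊆ {1,…,d}` of its nonzero coordinates. -/
def finDiff {d : ℕ} (S : (Fin d → ℤ) → ℤ) (y : Fin d → ℤ) : ℤ :=
  ∑ s : Finset (Fin d), (-1 : ℤ) ^ s.card * S (fun i => y i - if i ∈ s then 1 else 0)

open Finset Fintype

theorem sum_piFinset_eq_sum_mul_prod_boole {ι α R : Type*} [Fintype ι] [DecidableEq ι]
    [DecidableEq α] [CommSemiring R] (G : (ι → α) → R) {U F : ι → Finset α}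
    (hF : ∀ i, F i ⊆ U i) :
    ∑ x ∈ piFinset F, G x = ∑ x ∈ piFinset U, G x * ∏ i, if x i ∈ F i then 1 else 0 := by
  simp_rw [Fintype.prod_boole, ← mem_piFinset, mul_boole, Finset.sum_ite_mem,
    inter_eq_right.mpr (piFinset_subset _ _ hF)]

theorem sum_neg_one_pow_mul_sum_piFinset_ite {ι α R : Type*} [Fintype ι] [DecidableEq ι]
    [DecidableEq α] [CommRing R] (G : (ι → α) → R) {U P Q : ι → Finset α}
    (hP : ∀ i, P i ⊆ U i) (hQ : ∀ i, Q i ⊆ U i) :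
    ∑ s : Finset ι, (-1) ^ #s * ∑ x ∈ piFinset (fun i => if i ∈ s then Q i else P i), G x =
      ∑ x ∈ piFinset U, G x *
        ∏ i, ((if x i ∈ P i then 1 else 0) - (if x i ∈ Q i then 1 else 0)) := by
  have hsub : ∀ s : Finset ι, ∀ i, (if i ∈ s then Q i else P i) ⊆ U i := fun s i => by
    split_ifs
    exacts [hQ i, hP i]
  simp_rw [sum_piFinset_eq_sum_mul_prod_boole G (hsub _), prod_sub, ← powerset_univ, mul_sum,
    sum_comm (s := (univ : Finset ι).powerset)]
  refine sum_congr rfl fun x _ => sum_congr rfl fun s _ => ?_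
  rw [← prod_mul_prod_compl s, ← compl_eq_univ_sdiff,
    Finset.prod_congr rfl fun i (hi : i ∈ s) => by rw [if_pos hi],
    Finset.prod_congr rfl fun i (hi : i ∈ sᶜ) => by rw [if_neg (mem_compl.mp hi)]]
  ring

theorem sum_piFinset_Icc_comp_sub {ι R : Type*} [Fintype ι] [DecidableEq ι] [AddCommMonoid R]
    (G : (ι → ℤ) → R) (l u c : ι → ℤ) :
    ∑ x ∈ piFinset fun i => Icc (l i) (u i), G (fun i => x i - c i) =
      ∑ x ∈ piFinset fun i => Icc (l i - c i) (u i - c i), G x := by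
  refine sum_nbij' (fun x i => x i - c i) (fun x i => x i + c i) ?_ ?_
    (fun _ _ => by simp) (fun _ _ => by simp) fun _ _ => rfl <;>
  · simp only [mem_piFinset, mem_Icc]
    intro x hx i
    have := hx i
    omega

theorem sum_piFinset_Icc_finDiff {d : ℕ} (G : (Fin d → ℤ) → ℤ) (M : Fin d → ℤ)
    (hM : ∀ i, 0 ≤ M i) :
    ∑ x ∈ piFinset fun i => Icc 1 (M i), finDiff G x =
      ∑ s : Finset (Fin d), (-1) ^ #s * G (fun i => if i ∈ s then 0 else M i) := by
  have hind : ∀ i (z : ℤ),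
      ((if z ∈ Icc 1 (M i) then 1 else 0) - if z ∈ Icc 0 (M i - 1) then 1 else 0 : ℤ) =
        (if z ∈ ({M i} : Finset ℤ) then 1 else 0) - if z ∈ ({0} : Finset ℤ) then 1 else 0 := by
    intro i z
    have := hM i
    simp only [mem_Icc, mem_singleton]
    split_ifs <;> omega
  have hP : ∀ i, Icc 1 (M i) ⊆ Icc 0 (M i) := fun i => Icc_subset_Icc zero_le_one le_rfl
  have hQ : ∀ i, Icc 0 (M i - 1) ⊆ Icc 0 (M i) := fun i => Icc_subset_Icc le_rfl (by omega)
  have hP' : ∀ i, {M i} ⊆ Icc 0 (M i) := fun i => by simp [hM i]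
  have hQ' : ∀ i, {0} ⊆ Icc 0 (M i) := fun i => by simp [hM i]
  -- Both alternating sums expand to the same sum over `[0, M]`, by `hind` coordinatewise.
  calc ∑ x ∈ piFinset fun i => Icc 1 (M i), finDiff G x
      = ∑ s : Finset (Fin d), (-1) ^ #s *
          ∑ x ∈ piFinset fun i => if i ∈ s then Icc 0 (M i - 1) else Icc 1 (M i), G x := by
        simp only [finDiff, sum_comm (t := univ), ← mul_sum]
        refine sum_congr rfl fun s _ => ?_
        rw [sum_piFinset_Icc_comp_sub]
        congr 3 with i
        split_ifs <;> simp
    _ = ∑ x ∈ piFinset fun i => Icc 0 (M i), G x *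
          ∏ i, ((if x i ∈ ({M i} : Finset ℤ) then 1 else 0) -
            if x i ∈ ({0} : Finset ℤ) then 1 else 0) := by
        rw [sum_neg_one_pow_mul_sum_piFinset_ite G hP hQ]
        simp only [hind]
    _ = ∑ s : Finset (Fin d), (-1) ^ #s *
          ∑ x ∈ piFinset fun i => if i ∈ s then {0} else {M i}, G x :=
        (sum_neg_one_pow_mul_sum_piFinset_ite G hP' hQ').symm
    _ = ∑ s : Finset (Fin d), (-1) ^ #s * G (fun i => if i ∈ s then 0 else M i) := by
        congr! 3 with s
        rw [← sum_singleton G, ← piFinset_singleton]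
        congr 2 with i
        split_ifs <;> rfl

theorem finDiff_sum {d : ℕ} {α : Type*} (t : Finset α) (f : α → (Fin d → ℤ) → ℤ)
    (y : Fin d → ℤ) :
    finDiff (fun x => ∑ a ∈ t, f a x) y = ∑ a ∈ t, finDiff (f a) y := by
  simp only [finDiff, mul_sum]
  exact sum_comm

theorem finDiff_comp_sub {d : ℕ} (f : (Fin d → ℤ) → ℤ) (c y : Fin d → ℤ) :
    finDiff (fun x => f fun i => x i - c i) y = finDiff f fun i => y i - c i := by
  simp only [finDiff, sub_right_comm]

theorem finDiff_eq_zero_of_exists_lt_or_lt {d : ℕ} {f : (Fin d → ℤ) → ℤ} {L U : ℤ}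
    (hf : ∀ x, (∃ i, x i < L ∨ U < x i) → f x = 0) {y : Fin d → ℤ}
    (hy : ∃ i, y i < L ∨ U + 1 < y i) : finDiff f y = 0 := by
  obtain ⟨i, hi⟩ := hy
  refine sum_eq_zero fun s _ => ?_
  rw [hf _ ⟨i, ?_⟩, mul_zero]
  split_ifs <;> omega

theorem exists_outside_block_of_ne {d : ℕ} {m : ℤ} (hm : 0 < m) {a a' y : Fin d → ℤ}
    (hy : ∀ i, 1 ≤ y i ∧ y i ≤ m) (h : a ≠ a') :
    ∃ i, m * (a i - 1) + y i - m * (a' i - 1) < 1 ∨ m < m * (a i - 1) + y i - m * (a' i - 1) := by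
  obtain ⟨i, hi⟩ := Function.ne_iff.mp h
  refine ⟨i, ?_⟩
  have := hy i
  rcases hi.lt_or_gt with hlt | hlt
  · exact Or.inl (by nlinarith)
  · exact Or.inr (by nlinarith)

noncomputable def blockSum {d : ℕ} (m N : ℤ) (S : (Fin d → ℤ) → (Fin d → ℤ) → ℤ)
    (x : Fin d → ℤ) : ℤ :=
  ∑ a ∈ piFinset fun _ => Icc 1 N, S a fun i => x i - m * (a i - 1)

section blockSum

variable {d B : ℕ} {N : ℤ} {S : (Fin d → ℤ) → (Fin d → ℤ) → ℤ}

theorem finDiff_blockSum (x : Fin d → ℤ) :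
    finDiff (blockSum ((B : ℤ) + 1) N S) x =
      ∑ a ∈ piFinset fun _ => Icc 1 N, finDiff (S a) fun i => x i - ((B : ℤ) + 1) * (a i - 1) := by
  unfold blockSum
  rw [finDiff_sum]
  simp only [finDiff_comp_sub]

variable (hS : ∀ a : Fin d → ℤ, (∀ i, 1 ≤ a i ∧ a i ≤ N) →
    ∀ x : Fin d → ℤ, (∃ i, x i < 1 ∨ (B : ℤ) < x i) → S a x = 0)
include hS

theorem blockSum_eq_zero_of_exists_nonpos {x : Fin d → ℤ} (hx : ∃ i, x i ≤ 0) :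
    blockSum ((B : ℤ) + 1) N S x = 0 := by
  obtain ⟨i, hi⟩ := hx
  refine sum_eq_zero fun a ha => hS a (by simpa using ha) _ ⟨i, Or.inl ?_⟩
  have := ((mem_piFinset.mp ha) i)
  rw [mem_Icc] at this
  nlinarith [B.cast_nonneg (α := ℤ)]

theorem blockSum_block_point {a y : Fin d → ℤ} (ha : ∀ i, 1 ≤ a i ∧ a i ≤ N)
    (hy : ∀ i, 1 ≤ y i ∧ y i ≤ (B : ℤ) + 1) :
    blockSum ((B : ℤ) + 1) N S (fun i => ((B : ℤ) + 1) * (a i - 1) + y i) = S a y := by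
  rw [blockSum, sum_eq_single_of_mem a (by simpa using ha)]
  · simp only [add_sub_cancel_left]
  · intro a' ha' hne
    refine hS a' (by simpa using ha') _ ?_
    obtain ⟨i, hi⟩ := exists_outside_block_of_ne (by omega) hy hne.symm
    exact ⟨i, by omega⟩

theorem eq_finDiff_blockSum {T : (Fin d → ℤ) → ℤ}
    (hT1 : ∀ a y : Fin d → ℤ, (∀ i, 1 ≤ a i ∧ a i ≤ N) →
      (∀ i, 1 ≤ y i ∧ y i ≤ (B : ℤ) + 1) →
      T (fun i => ((B : ℤ) + 1) * (a i - 1) + y i) = finDiff (S a) y)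
    (hT2 : ∀ x : Fin d → ℤ,
      (¬ ∃ a y : Fin d → ℤ, (∀ i, 1 ≤ a i ∧ a i ≤ N) ∧
        (∀ i, 1 ≤ y i ∧ y i ≤ (B : ℤ) + 1) ∧
        x = fun i => ((B : ℤ) + 1) * (a i - 1) + y i) → T x = 0)
    (x : Fin d → ℤ) : T x = finDiff (blockSum ((B : ℤ) + 1) N S) x := by
  rw [finDiff_blockSum]
  by_cases hx : ∃ a y : Fin d → ℤ, (∀ i, 1 ≤ a i ∧ a i ≤ N) ∧
      (∀ i, 1 ≤ y i ∧ y i ≤ (B : ℤ) + 1) ∧ x = fun i => ((B : ℤ) + 1) * (a i - 1) + y i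
  · obtain ⟨a, y, ha, hy, rfl⟩ := hx
    rw [hT1 a y ha hy, sum_eq_single_of_mem a (by simpa using ha)]
    · simp only [add_sub_cancel_left]
    · intro a' ha' hne
      refine finDiff_eq_zero_of_exists_lt_or_lt (hS a' (by simpa using ha')) ?_
      exact exists_outside_block_of_ne (by positivity) hy hne.symm
  · rw [hT2 x hx, eq_comm]
    refine sum_eq_zero fun a ha => finDiff_eq_zero_of_exists_lt_or_lt (hS a (by simpa using ha)) ?_
    by_contra! hin
    exact hx ⟨a, _, by simpa using ha, fun i => hin i, by ext i; ring⟩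

end blockSum

theorem langerman_block_prefix_sum_general (d B N : ℕ)
    (S : (Fin d → ℤ) → (Fin d → ℤ) → ℤ)
    (hS : ∀ a : Fin d → ℤ, (∀ i, 1 ≤ a i ∧ a i ≤ (N : ℤ)) →
      ∀ x : Fin d → ℤ, (∃ i, x i < 1 ∨ (B : ℤ) < x i) → S a x = 0)
    (T : (Fin d → ℤ) → ℤ)
    (hT1 : ∀ a y : Fin d → ℤ, (∀ i, 1 ≤ a i ∧ a i ≤ (N : ℤ)) →
      (∀ i, 1 ≤ y i ∧ y i ≤ (B : ℤ) + 1) →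
      T (fun i => ((B : ℤ) + 1) * (a i - 1) + y i) = finDiff (S a) y)
    (hT2 : ∀ x : Fin d → ℤ,
      (¬ ∃ a y : Fin d → ℤ, (∀ i, 1 ≤ a i ∧ a i ≤ (N : ℤ)) ∧
        (∀ i, 1 ≤ y i ∧ y i ≤ (B : ℤ) + 1) ∧
        x = fun i => ((B : ℤ) + 1) * (a i - 1) + y i) → T x = 0) :
    ∀ a y : Fin d → ℤ, (∀ i, 1 ≤ a i ∧ a i ≤ (N : ℤ)) →
      (∀ i, 1 ≤ y i ∧ y i ≤ (B : ℤ) + 1) →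
      ∑ x ∈ Fintype.piFinset
          (fun i => Finset.Icc (1 : ℤ) (((B : ℤ) + 1) * (a i - 1) + y i)), T x =
        S a y := by
  intro a y ha hy
  have hpos : ∀ i, 0 ≤ ((B : ℤ) + 1) * (a i - 1) + y i := fun i => by
    nlinarith [ha i, hy i, B.cast_nonneg (α := ℤ)]
  rw [sum_congr rfl fun x _ => eq_finDiff_blockSum hS hT1 hT2 x, sum_piFinset_Icc_finDiff _ _ hpos,
    sum_eq_single_of_mem ∅ (mem_univ _)]
  · simpa using blockSum_block_point hS ha hy
  · intro s _ hs
    obtain ⟨i, hi⟩ := nonempty_iff_ne_empty.mpr hs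
    rw [blockSum_eq_zero_of_exists_nonpos hS ⟨i, by simp [hi]⟩, mul_zero]

/-- Block-assembly prefix-sum identity for the reduction from OuMv_k to the
(k−1)-Dimensional Langerman's problem: the tensor `T` assembled from the finite
differences `A_a = finDiff (S a)` in blocks of side `B+1` indexed by
`a ∈ {1,…,N}^d` satisfies: the d-dimensional prefix sum of `T` at the position
`(B+1)·(a − 𝟙) + y` equals `S a y`. -/
theorem langerman_block_prefix_sum (d B N : ℕ) (hd : 1 ≤ d) (hB : 1 ≤ B) (hN : 1 ≤ N)
    (S : (Fin d → ℤ) → (Fin d → ℤ) → ℤ)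
    (hS : ∀ a : Fin d → ℤ, (∀ i, 1 ≤ a i ∧ a i ≤ (N : ℤ)) →
      ∀ x : Fin d → ℤ, (∃ i, x i < 1 ∨ (B : ℤ) < x i) → S a x = 0)
    (T : (Fin d → ℤ) → ℤ)
    (hT1 : ∀ a y : Fin d → ℤ, (∀ i, 1 ≤ a i ∧ a i ≤ (N : ℤ)) →
      (∀ i, 1 ≤ y i ∧ y i ≤ (B : ℤ) + 1) →
      T (fun i => ((B : ℤ) + 1) * (a i - 1) + y i) = finDiff (S a) y)
    (hT2 : ∀ x : Fin d → ℤ,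
      (¬ ∃ a y : Fin d → ℤ, (∀ i, 1 ≤ a i ∧ a i ≤ (N : ℤ)) ∧
        (∀ i, 1 ≤ y i ∧ y i ≤ (B : ℤ) + 1) ∧
        x = fun i => ((B : ℤ) + 1) * (a i - 1) + y i) → T x = 0) :
    ∀ a y : Fin d → ℤ, (∀ i, 1 ≤ a i ∧ a i ≤ (N : ℤ)) →
      (∀ i, 1 ≤ y i ∧ y i ≤ (B : ℤ) + 1) →
      ∑ x ∈ Fintype.piFinset
          (fun i => Finset.Icc (1 : ℤ) (((B : ℤ) + 1) * (a i - 1) + y i)), T x =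
        S a y :=
  langerman_block_prefix_sum_general d B N S hS T hT1 hT2
end

section
/- Let d ≥ 1 and let P be a finite set of points in ℝ^d. Suppose p ∈ P has all coordinates strictly positive and p is not dominated by any other point of P, i.e., for every q ∈ P with q ≠ p there exists i with q_i < p_i. For q ∈ ℝ^d let D(q) = {x ∈ ℝ^d : 0 ≤ x_i ≤ q_i for every i}. Then the d-dimensional Lebesgue measure of ⋃_{q ∈ P} D(q) is strictly greater than the d-dimensional Lebesgue measure of ⋃_{q ∈ P ∖ {p}} D(q). -/
/-!
Every other point `q` is strictly below `p` in some coordinate, so for a small enough `ε > 0`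
the half-open cube `∏ᵢ (pᵢ - ε, pᵢ]` lies in `D(p)` but misses every `D(q)`, `q ≠ p`. Adding this
cube of positive volume to the (bounded, hence finite-measure) union over `P ∖ {p}` stays inside
the union over `P`.
-/

open MeasureTheory Set Filter Topology
open scoped ENNReal

theorem MeasureTheory.measure_lt_of_disjoint_union_subset {α : Type*} [MeasurableSpace α]
    {μ : Measure α} {s t u : Set α} (hs : μ s ≠ ∞) (ht : MeasurableSet t) (hst : Disjoint s t)
    (ht₀ : μ t ≠ 0) (h : s ∪ t ⊆ u) : μ s < μ u :=
  calc μ s < μ s + μ t := ENNReal.lt_add_right hs ht₀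
    _ = μ (s ∪ t) := (measure_union hst ht).symm
    _ ≤ μ u := measure_mono h

section CornerCube

variable {ι : Type*}

theorem setOf_forall_nonneg_and_le_eq_Icc (q : ι → ℝ) :
    {x : ι → ℝ | ∀ i, 0 ≤ x i ∧ x i ≤ q i} = Icc 0 q := by
  ext x
  simp [Pi.le_def, forall_and]

theorem exists_pos_forall_le_and_forall_exists_le_sub [Finite ι] {p : ι → ℝ}
    (hpos : ∀ i, 0 < p i) (Q : Finset (ι → ℝ)) (hQ : ∀ q ∈ Q, ∃ i, q i < p i) :
    ∃ ε > 0, (∀ i, ε ≤ p i) ∧ ∀ q ∈ Q, ∃ i, q i ≤ p i - ε := by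
  have below_p : ∀ᶠ ε in 𝓝 (0 : ℝ), ∀ i, ε < p i :=
    eventually_all.2 fun i => eventually_lt_nhds (hpos i)
  have below_gap : ∀ᶠ ε in 𝓝 (0 : ℝ), ∀ q ∈ Q, ∃ i, ε < p i - q i := by
    refine (Q.eventually_all).2 fun q hq => ?_
    obtain ⟨i, hi⟩ := hQ q hq
    filter_upwards [eventually_lt_nhds (sub_pos.2 hi)] with ε hε using ⟨i, hε⟩
  obtain ⟨ε, ⟨hp, hgap⟩, hε⟩ :=
    ((below_p.and below_gap).filter_mono nhdsWithin_le_nhds |>.and self_mem_nhdsWithin).exists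
      (f := 𝓝[>] (0 : ℝ))
  refine ⟨ε, hε, fun i => (hp i).le, fun q hq => ?_⟩
  obtain ⟨i, hi⟩ := hgap q hq
  exact ⟨i, by linarith⟩

theorem pi_Ioc_sub_subset_Icc {p : ι → ℝ} {ε : ℝ} (hε : ∀ i, ε ≤ p i) :
    (pi univ fun i => Ioc (p i - ε) (p i)) ⊆ Icc 0 p := fun _ hx =>
  ⟨fun i => sub_nonneg.2 (hε i) |>.trans (hx i trivial).1.le, fun i => (hx i trivial).2⟩

theorem disjoint_Icc_pi_Ioc_sub {p q : ι → ℝ} {ε : ℝ} {i : ι} (hi : q i ≤ p i - ε) :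
    Disjoint (Icc 0 q) (pi univ fun i => Ioc (p i - ε) (p i)) :=
  disjoint_left.2 fun _ hxq hx => ((hx i trivial).1.trans_le (hxq.2 i)).not_ge hi

end CornerCube

theorem klee_strict_decrease_general (d : ℕ)
    (P : Finset (Fin d → ℝ)) (p : Fin d → ℝ) (hp : p ∈ P)
    (hpos : ∀ i, 0 < p i)
    (hmax : ∀ q ∈ P, q ≠ p → ∃ i, q i < p i) :
    MeasureTheory.volume
        (⋃ q ∈ P.erase p, {x : Fin d → ℝ | ∀ i, 0 ≤ x i ∧ x i ≤ q i}) <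
      MeasureTheory.volume
        (⋃ q ∈ P, {x : Fin d → ℝ | ∀ i, 0 ≤ x i ∧ x i ≤ q i}) := by
  simp_rw [setOf_forall_nonneg_and_le_eq_Icc]
  obtain ⟨ε, hε, hεp, hgap⟩ := exists_pos_forall_le_and_forall_exists_le_sub hpos (P.erase p)
    fun q hq => hmax q (Finset.mem_of_mem_erase hq) (Finset.ne_of_mem_erase hq)
  set C : Set (Fin d → ℝ) := pi univ fun i => Ioc (p i - ε) (p i)
  have hC₀ : volume C ≠ 0 := by simp [C, Real.volume_pi_Ioc, hε]
  have hdisj : Disjoint (⋃ q ∈ P.erase p, Icc 0 q) C := by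
    refine disjoint_iUnion₂_left.2 fun q hq => ?_
    obtain ⟨i, hi⟩ := hgap q hq
    exact disjoint_Icc_pi_Ioc_sub hi
  have hsub : (⋃ q ∈ P.erase p, Icc 0 q) ∪ C ⊆ ⋃ q ∈ P, Icc 0 q :=
    union_subset (biUnion_subset_biUnion_left fun q => Finset.mem_of_mem_erase)
      ((pi_Ioc_sub_subset_Icc hεp).trans (subset_biUnion_of_mem (u := fun q => Icc 0 q) hp))
  exact measure_lt_of_disjoint_union_subset
    (measure_biUnion_lt_top (P.erase p).finite_toSet fun q _ => measure_Icc_lt_top).ne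
    (MeasurableSet.univ_pi fun _ => measurableSet_Ioc) hdisj hC₀ hsub

/-- Removing an undominated point `p` (with strictly positive coordinates) from a
finite point set `P ⊆ ℝ^d` strictly decreases the Lebesgue measure of the union of
the dominated boxes `D(q) = {x : 0 ≤ xᵢ ≤ qᵢ ∀i}`. -/
theorem klee_strict_decrease (d : ℕ) (hd : 1 ≤ d)
    (P : Finset (Fin d → ℝ)) (p : Fin d → ℝ) (hp : p ∈ P)
    (hpos : ∀ i, 0 < p i)
    (hmax : ∀ q ∈ P, q ≠ p → ∃ i, q i < p i) :
    MeasureTheory.volume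
        (⋃ q ∈ P.erase p, {x : Fin d → ℝ | ∀ i, 0 ≤ x i ∧ x i ≤ q i}) <
      MeasureTheory.volume
        (⋃ q ∈ P, {x : Fin d → ℝ | ∀ i, 0 ≤ x i ∧ x i ≤ q i}) :=
  klee_strict_decrease_general d P p hp hpos hmax
end

section
/- Let (α, ≤) be a partially ordered set and let S and S' be finite subsets of α. For a finite subset X ⊆ α write Max(X) = {x ∈ X : there is no y ∈ X with x < y} for its set of maximal elements, and let S'_0 = S' ∩ Max(S ∪ S'). Then Max(S ∪ S') = S'_0 ∪ {p ∈ Max(S) : there is no q ∈ S'_0 with p < q}. -/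
/-!
An element of `Max(S ∪ S')` outside `S'` is maximal in `S` and lies strictly below nothing in
`S ∪ S'`. Conversely, suppose `p ∈ Max(S)` were strictly below some element of `S ∪ S'`. By
finiteness that element lies below a maximal element `q` of `S ∪ S'`; `q ∈ S` contradicts
`p ∈ Max(S)`, and `q ∈ S'` puts `q` in `S'₀`.
-/

/-- The set of maximal elements of a finite subset `X` of a poset. -/
def maximalIn {α : Type*} [PartialOrder α] (X : Finset α) : Set α :=
  {x | x ∈ X ∧ ∀ y ∈ X, ¬ x < y}

section maximalIn

variable {α : Type*} [PartialOrder α] {X Y : Finset α} {x y : α}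

theorem mem_maximalIn_iff_maximal : x ∈ maximalIn X ↔ Maximal (· ∈ X) x := by
  rw [maximal_iff_forall_gt]
  exact and_congr_right fun _ => forall_congr' fun _ => imp_not_comm

theorem exists_le_mem_maximalIn (hy : y ∈ X) : ∃ z ∈ maximalIn X, y ≤ z := by
  obtain ⟨z, hyz, hz⟩ := X.exists_le_maximal hy
  exact ⟨z, mem_maximalIn_iff_maximal.2 hz, hyz⟩

theorem mem_maximalIn_of_forall_not_lt (hx : x ∈ X) (h : ∀ q ∈ maximalIn X, ¬ x < q) :
    x ∈ maximalIn X := by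
  refine ⟨hx, fun y hy hxy => ?_⟩
  obtain ⟨z, hz, hyz⟩ := exists_le_mem_maximalIn hy
  exact h z hz (hxy.trans_le hyz)

theorem mem_maximalIn_of_subset (hXY : X ⊆ Y) (hx : x ∈ X) (hxY : x ∈ maximalIn Y) :
    x ∈ maximalIn X :=
  ⟨hx, fun y hy => hxY.2 y (hXY hy)⟩

end maximalIn

/-- Decomposition of the maximal (skyline) elements of a union: with
`S'₀ = S' ∩ Max(S ∪ S')`, the maximal elements of `S ∪ S'` are exactly `S'₀`
together with those maximal elements of `S` not strictly below any element of
`S'₀`. -/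
theorem skyline_union_decomposition {α : Type*} [PartialOrder α] [DecidableEq α]
    (S S' : Finset α) :
    maximalIn (S ∪ S') =
      ((S' : Set α) ∩ maximalIn (S ∪ S')) ∪
        {p ∈ maximalIn S | ∀ q ∈ (S' : Set α) ∩ maximalIn (S ∪ S'), ¬ p < q} := by
  ext x
  constructor
  · intro hx
    by_cases hxS' : x ∈ S'
    · exact Or.inl ⟨hxS', hx⟩
    have hxS : x ∈ S := (Finset.mem_union.1 hx.1).resolve_right hxS'
    exact Or.inr ⟨mem_maximalIn_of_subset Finset.subset_union_left hxS hx,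
      fun q hq => hx.2 q hq.2.1⟩
  · rintro (⟨-, hx⟩ | ⟨hxS, hno⟩)
    · exact hx
    refine mem_maximalIn_of_forall_not_lt (Finset.mem_union_left _ hxS.1) fun q hq => ?_
    rcases Finset.mem_union.1 hq.1 with hqS | hqS'
    · exact hxS.2 q hqS
    · exact hno q ⟨hqS', hq⟩
end
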